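/- Fix ρ ∈ (0,1) and set μ* := min{ρ,1−ρ}. For G ∈ X¹_{μ,χ} define A_ρ(G)(q) := −(1−ρ) ∫_q^∞ ∫_p^∞ (G'(r)/r) dr dp. Then for every μ ∈ [0,μ*) and every χ > 0 there is a constant C > 0 such that for all G ∈ X¹_{μ,χ}: the iterated integral defining A_ρ(G)(q) converges for every q ≥ 0, A_ρ(G) ∈ X²_{μ,χ}, and ‖A_ρ(G)‖_{2,μ,χ} ≤ C ‖G‖_{1,μ,χ}. -/

import Mathlib

open MeasureTheory Set Filter

noncomputable section

/-- Ambient smoothness class: continuous on `[0,∞)` and `C²` on `(0,∞)`. -/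
def Smooth2 (G : ℝ → ℝ) : Prop :=
  ContinuousOn G (Set.Ici 0) ∧
  (∀ x ∈ Set.Ioi (0:ℝ), DifferentiableAt ℝ G x) ∧
  (∀ x ∈ Set.Ioi (0:ℝ), DifferentiableAt ℝ (deriv G) x)

/-- The weighted quantity `(1+q)^{χ+μ+ρ} q^{k-ρ-μ} |G^{(k)}(q)|`. -/
def wq (ρ : ℝ) (k : ℕ) (μ χ : ℝ) (G : ℝ → ℝ) (q : ℝ) : ℝ :=
  (1 + q) ^ (χ + μ + ρ) * q ^ ((k:ℝ) - ρ - μ) * |deriv^[k] G q|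

/-- The seminorm `⌈G⌉_{k,μ,χ}`.  Note that `semN ρ 0 (-ρ) χ G` is exactly
`sup_{q>0} (1+q)^χ |G(q)| = ‖G‖_{0,χ}`. -/
def semN (ρ : ℝ) (k : ℕ) (μ χ : ℝ) (G : ℝ → ℝ) : ℝ :=
  ⨆ q : Set.Ioi (0:ℝ), wq ρ k μ χ G (q : ℝ)

/-- The norm `‖G‖_{k,μ,χ} = ‖G‖_{0,χ} + Σ_{ℓ=1}^k ⌈G⌉_{ℓ,μ,χ}`. -/
def fullN (ρ : ℝ) (k : ℕ) (μ χ : ℝ) (G : ℝ → ℝ) : ℝ :=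
  semN ρ 0 (-ρ) χ G + ∑ ℓ ∈ Finset.Icc 1 k, semN ρ ℓ μ χ G

/-- Membership in the space `X^k_{μ,χ}`: smoothness plus finiteness of the norm. -/
def MemX (ρ : ℝ) (k : ℕ) (μ χ : ℝ) (G : ℝ → ℝ) : Prop :=
  Smooth2 G ∧
  (∃ M : ℝ, ∀ q : ℝ, 0 < q → wq ρ 0 (-ρ) χ G q ≤ M) ∧
  ∀ ℓ ∈ Finset.Icc 1 k, ∃ M : ℝ, ∀ q : ℝ, 0 < q → wq ρ ℓ μ χ G q ≤ M

/-- The operator `A_ρ(G)(q) = -(1-ρ) ∫_q^∞ ∫_p^∞ G'(r)/r dr dp`. -/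
def Arho (ρ : ℝ) (G : ℝ → ℝ) (q : ℝ) : ℝ :=
  -(1 - ρ) * ∫ p in Set.Ioi q, ∫ r in Set.Ioi p, deriv G r / r

/-!
Write `ν = ρ + μ ∈ (0,1)`. The weight of `⌈G⌉_{1,μ,χ}` gives `|G'(r)/r| ≲ r^(ν-2)` and
`|G'(r)/r| ≲ r^(-χ-2)`, so `H(p) = ∫_p^∞ G'(r)/r dr` satisfies `|H(p)| ≲ p^(ν-1)/(1-ν)` and
`|H(p)| ≲ p^(-χ-1)/(χ+1)`. Since `ν > 0` and `χ > 0`, `H` is integrable on `(0,∞)` and its tail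
integral is bounded and `O(q^(-χ))`; splitting `1 + q ≤ 2 max 1 q` turns these two-regime bounds
into the weighted ones. Finally `A_ρ(G)' = (1-ρ) H` and `A_ρ(G)'' = -(1-ρ) G'(q)/q`, so the
`k = 2` weight of `A_ρ(G)` is exactly `1-ρ` times the `k = 1` weight of `G`.
-/

open Topology

section RpowBounds

variable {f : ℝ → ℝ} {a b s C : ℝ}

lemma integrableOn_Ioi_of_abs_le_rpow (hf : ContinuousOn f (Ioi a)) (ha : 0 < a) (hs : s < -1)
    (hbound : ∀ x ∈ Ioi a, |f x| ≤ C * x ^ s) : IntegrableOn f (Ioi a) :=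
  ((integrableOn_Ioi_rpow_of_lt hs ha).const_mul C).mono'
    (hf.aestronglyMeasurable measurableSet_Ioi)
    ((ae_restrict_iff' measurableSet_Ioi).2 (.of_forall hbound))

lemma integrableOn_Ioc_of_abs_le_rpow (hf : ContinuousOn f (Ioc a b)) (hs : -1 < s)
    (hbound : ∀ x ∈ Ioc a b, |f x| ≤ C * x ^ s) : IntegrableOn f (Ioc a b) :=
  ((intervalIntegral.intervalIntegrable_rpow' hs).const_mul C).1.mono'
    (hf.aestronglyMeasurable measurableSet_Ioc)
    ((ae_restrict_iff' measurableSet_Ioc).2 (.of_forall hbound))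

lemma abs_integral_Ioi_le_rpow (ha : 0 < a) (hs : s < -1)
    (hbound : ∀ x ∈ Ioi a, |f x| ≤ C * x ^ s) :
    |∫ x in Ioi a, f x| ≤ C * a ^ (s + 1) / -(s + 1) :=
  calc |∫ x in Ioi a, f x| ≤ ∫ x in Ioi a, C * x ^ s :=
        (Real.norm_eq_abs _).symm.trans_le <| norm_integral_le_of_norm_le
          ((integrableOn_Ioi_rpow_of_lt hs ha).const_mul C)
          ((ae_restrict_iff' measurableSet_Ioi).2 (.of_forall hbound))
    _ = C * a ^ (s + 1) / -(s + 1) := by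
        rw [integral_const_mul, integral_Ioi_rpow_of_lt hs ha, div_neg, neg_div, mul_neg,
          mul_div_assoc]

lemma abs_intervalIntegral_le_rpow (hab : a ≤ b) (hs : -1 < s)
    (hbound : ∀ x ∈ Ioc a b, |f x| ≤ C * x ^ s) :
    |∫ x in a..b, f x| ≤ C * (b ^ (s + 1) - a ^ (s + 1)) / (s + 1) :=
  calc |∫ x in a..b, f x| ≤ ∫ x in a..b, C * x ^ s :=
        (Real.norm_eq_abs _).symm.trans_le <| intervalIntegral.norm_integral_le_of_norm_le hab
          (.of_forall hbound) ((intervalIntegral.intervalIntegrable_rpow' hs).const_mul C)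
    _ = C * (b ^ (s + 1) - a ^ (s + 1)) / (s + 1) := by
        rw [intervalIntegral.integral_const_mul, integral_rpow (.inl hs), mul_div_assoc]

lemma div_le_mul_rpow_of_rpow_mul_le {r e x M : ℝ} (hr : 0 < r) (h : r ^ e * x ≤ M) :
    x / r ≤ M * r ^ (-e - 1) :=
  calc x / r = r ^ (-e - 1) * (r ^ e * x) := by
        rw [← mul_assoc, ← Real.rpow_add hr, show -e - 1 + e = -1 by ring, Real.rpow_neg_one,
          div_eq_inv_mul]
    _ ≤ r ^ (-e - 1) * M := by gcongr
    _ = M * r ^ (-e - 1) := mul_comm _ _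

lemma one_add_rpow_mul_le {q e x : ℝ} (hq : 0 ≤ q) (he : 0 ≤ e) (hx : 0 ≤ x) :
    (1 + q) ^ e * x ≤ 2 ^ e * max x (q ^ e * x) := by
  rcases le_total q 1 with hq1 | hq1
  · calc (1 + q) ^ e * x ≤ 2 ^ e * x := by gcongr; linarith
      _ ≤ 2 ^ e * max x (q ^ e * x) := by gcongr; exact le_max_left _ _
  · calc (1 + q) ^ e * x ≤ (2 * q) ^ e * x := by gcongr; linarith
      _ = 2 ^ e * (q ^ e * x) := by rw [Real.mul_rpow zero_le_two hq, mul_assoc]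
      _ ≤ 2 ^ e * max x (q ^ e * x) := by gcongr; exact le_max_right _ _

end RpowBounds

def tailIntegral (f : ℝ → ℝ) (q : ℝ) : ℝ := ∫ r in Ioi q, f r

section TailIntegral

variable {f : ℝ → ℝ} {a : ℝ}

lemma hasDerivAt_tailIntegral (hf : ContinuousOn f (Ioi a))
    (hint : ∀ b, a < b → IntegrableOn f (Ioi b)) {p : ℝ} (hp : a < p) :
    HasDerivAt (tailIntegral f) (-f p) p := by
  obtain ⟨c, hac, hcp⟩ := exists_between hp
  have hprim : HasDerivAt (fun q => tailIntegral f c - ∫ r in c..q, f r) (-f p) p := by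
    simpa using (intervalIntegral.integral_hasDerivAt_right
        ((intervalIntegrable_iff_integrableOn_Ioc_of_le hcp.le).2
          ((hint c hac).mono_set Ioc_subset_Ioi_self))
        (hf.stronglyMeasurableAtFilter isOpen_Ioi p hp)
        (hf.continuousAt (Ioi_mem_nhds hp))).const_sub (tailIntegral f c)
  refine hprim.congr_of_eventuallyEq (eventually_of_mem (Ioi_mem_nhds hcp) fun q hq => ?_)
  show tailIntegral f q = tailIntegral f c - ∫ r in c..q, f r
  rw [← intervalIntegral.integral_Ioi_sub_Ioi' (hint c hac) (hint q (hac.trans hq)), tailIntegral,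
    tailIntegral, sub_sub_cancel]

lemma continuousWithinAt_tailIntegral (hint : IntegrableOn f (Ioi a)) :
    ContinuousWithinAt (tailIntegral f) (Ici a) a := by
  have hprim : ContinuousWithinAt (fun q => tailIntegral f a - ∫ r in a..q, f r)
      (Icc a (a + 1)) a :=
    continuousWithinAt_const.sub (intervalIntegral.continuousWithinAt_primitive
      (measure_singleton a) (by
        simpa [intervalIntegrable_iff_integrableOn_Ioc_of_le]
          using hint.mono_set Ioc_subset_Ioi_self))
  refine (hprim.congr (fun q hq => ?_) ?_).mono_of_mem_nhdsWithin
    (Icc_mem_nhdsGE (lt_add_one a))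
  · rw [← intervalIntegral.integral_Ioi_sub_Ioi hint hq.1, tailIntegral, tailIntegral,
      sub_sub_cancel]
  · simp

end TailIntegral

/-- `WeightedBound (ρ + μ) χ M G'` says `⌈G⌉_{1,μ,χ} ≤ M`. -/
def WeightedBound (ν χ M : ℝ) (g : ℝ → ℝ) : Prop :=
  ∀ q, 0 < q → (1 + q) ^ (χ + ν) * q ^ (1 - ν) * |g q| ≤ M

namespace WeightedBound

variable {g : ℝ → ℝ} {ν χ M p q : ℝ}

lemma nonneg (hg : WeightedBound ν χ M g) : 0 ≤ M :=
  (by positivity : (0 : ℝ) ≤ (1 + 1) ^ (χ + ν) * 1 ^ (1 - ν) * |g 1|).trans (hg 1 one_pos)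

lemma abs_div_le_rpow_sub_two (hg : WeightedBound ν χ M g) (hχν : 0 ≤ χ + ν) (hp : 0 < p) :
    |g p / p| ≤ M * p ^ (ν - 2) := by
  have h : p ^ (1 - ν) * |g p| ≤ M := calc
    p ^ (1 - ν) * |g p| ≤ (1 + p) ^ (χ + ν) * (p ^ (1 - ν) * |g p|) :=
      le_mul_of_one_le_left (by positivity) (Real.one_le_rpow (by linarith) hχν)
    _ ≤ M := by rw [← mul_assoc]; exact hg p hp
  rw [abs_div, abs_of_pos hp]
  convert div_le_mul_rpow_of_rpow_mul_le hp h using 3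
  ring

lemma abs_div_le_rpow_neg_sub_two (hg : WeightedBound ν χ M g) (hχν : 0 ≤ χ + ν) (hp : 0 < p) :
    |g p / p| ≤ M * p ^ (-χ - 2) := by
  have h : p ^ (χ + 1) * |g p| ≤ M := calc
    p ^ (χ + 1) * |g p| = p ^ (χ + ν) * p ^ (1 - ν) * |g p| := by
      rw [← Real.rpow_add hp]; ring_nf
    _ ≤ (1 + p) ^ (χ + ν) * p ^ (1 - ν) * |g p| := by
      gcongr; linarith
    _ ≤ M := hg p hp
  rw [abs_div, abs_of_pos hp]
  convert div_le_mul_rpow_of_rpow_mul_le hp h using 3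
  ring

lemma integrableOn_div (hg : WeightedBound ν χ M g) (hgc : ContinuousOn g (Ioi 0))
    (hν : ν < 1) (hχν : 0 ≤ χ + ν) (hp : 0 < p) :
    IntegrableOn (fun r => g r / r) (Ioi p) :=
  integrableOn_Ioi_of_abs_le_rpow
    ((hgc.div continuousOn_id fun _ hr => hr.ne').mono (Ioi_subset_Ioi hp.le)) hp
    (by linarith) fun r hr => hg.abs_div_le_rpow_sub_two hχν (hp.trans hr)

lemma hasDerivAt_tailIntegral_div (hg : WeightedBound ν χ M g) (hgc : ContinuousOn g (Ioi 0))
    (hν : ν < 1) (hχν : 0 ≤ χ + ν) (hp : 0 < p) :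
    HasDerivAt (tailIntegral fun r => g r / r) (-(g p / p)) p :=
  hasDerivAt_tailIntegral (hgc.div continuousOn_id fun _ hr => hr.ne')
    (fun _ hb => hg.integrableOn_div hgc hν hχν hb) hp

lemma abs_tailIntegral_div_le_rpow_sub_one (hg : WeightedBound ν χ M g) (hν : ν < 1)
    (hχν : 0 ≤ χ + ν) (hp : 0 < p) :
    |tailIntegral (fun r => g r / r) p| ≤ M / (1 - ν) * p ^ (ν - 1) := by
  refine (abs_integral_Ioi_le_rpow hp (by linarith : ν - 2 < -1)
    fun r hr => hg.abs_div_le_rpow_sub_two hχν (hp.trans hr)).trans_eq ?_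
  rw [show ν - 2 + 1 = ν - 1 by ring, show -(ν - 1) = 1 - ν by ring]
  ring

lemma abs_tailIntegral_div_le_rpow_neg_sub_one (hg : WeightedBound ν χ M g) (hχ : 0 < χ)
    (hχν : 0 ≤ χ + ν) (hp : 0 < p) :
    |tailIntegral (fun r => g r / r) p| ≤ M / (χ + 1) * p ^ (-χ - 1) := by
  refine (abs_integral_Ioi_le_rpow hp (by linarith : -χ - 2 < -1)
    fun r hr => hg.abs_div_le_rpow_neg_sub_two hχν (hp.trans hr)).trans_eq ?_
  rw [show -χ - 2 + 1 = -χ - 1 by ring, show -(-χ - 1) = χ + 1 by ring]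
  ring

lemma continuousOn_tailIntegral_div (hg : WeightedBound ν χ M g) (hgc : ContinuousOn g (Ioi 0))
    (hν : ν < 1) (hχν : 0 ≤ χ + ν) : ContinuousOn (tailIntegral fun r => g r / r) (Ioi 0) :=
  fun _ hp => (hg.hasDerivAt_tailIntegral_div hgc hν hχν hp).continuousAt.continuousWithinAt

lemma integrableOn_tailIntegral_div (hg : WeightedBound ν χ M g) (hgc : ContinuousOn g (Ioi 0))
    (hν : ν ∈ Ioo 0 1) (hχ : 0 < χ) :
    IntegrableOn (tailIntegral fun r => g r / r) (Ioi 0) := by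
  have hχν : 0 ≤ χ + ν := by linarith [hν.1]
  have hcont := hg.continuousOn_tailIntegral_div hgc hν.2 hχν
  rw [← Ioc_union_Ioi_eq_Ioi zero_le_one]
  exact (integrableOn_Ioc_of_abs_le_rpow (hcont.mono Ioc_subset_Ioi_self)
      (by linarith [hν.1] : -1 < ν - 1)
      fun p hp => hg.abs_tailIntegral_div_le_rpow_sub_one hν.2 hχν hp.1).union
    (integrableOn_Ioi_of_abs_le_rpow (hcont.mono (Ioi_subset_Ioi zero_le_one)) one_pos
      (by linarith : -χ - 1 < -1)
      fun p hp => hg.abs_tailIntegral_div_le_rpow_neg_sub_one hχ hχν (one_pos.trans hp))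

lemma tailIntegral_div (hg : WeightedBound ν χ M g) (hν : ν < 1) (hχ : 0 < χ)
    (hχν : 0 ≤ χ + ν) :
    WeightedBound ν χ (2 ^ (χ + ν) * (M / (1 - ν) + M / (χ + 1)))
      (tailIntegral fun r => g r / r) := by
  intro q hq
  set H := tailIntegral fun r => g r / r
  have hM := hg.nonneg
  have hnear : q ^ (1 - ν) * |H q| ≤ M / (1 - ν) := calc
    q ^ (1 - ν) * |H q| ≤ q ^ (1 - ν) * (M / (1 - ν) * q ^ (ν - 1)) := by
      gcongr; exact hg.abs_tailIntegral_div_le_rpow_sub_one hν hχν hq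
    _ = M / (1 - ν) := by
      rw [mul_left_comm, ← Real.rpow_add hq, show 1 - ν + (ν - 1) = 0 by ring, Real.rpow_zero,
        mul_one]
  have hfar : q ^ (χ + ν) * (q ^ (1 - ν) * |H q|) ≤ M / (χ + 1) := calc
    q ^ (χ + ν) * (q ^ (1 - ν) * |H q|) = q ^ (χ + 1) * |H q| := by
      rw [← mul_assoc, ← Real.rpow_add hq]; ring_nf
    _ ≤ q ^ (χ + 1) * (M / (χ + 1) * q ^ (-χ - 1)) := by
      gcongr; exact hg.abs_tailIntegral_div_le_rpow_neg_sub_one hχ hχν hq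
    _ = M / (χ + 1) := by
      rw [mul_left_comm, ← Real.rpow_add hq, show χ + 1 + (-χ - 1) = 0 by ring, Real.rpow_zero,
        mul_one]
  calc (1 + q) ^ (χ + ν) * q ^ (1 - ν) * |H q| = (1 + q) ^ (χ + ν) * (q ^ (1 - ν) * |H q|) :=
        mul_assoc _ _ _
    _ ≤ 2 ^ (χ + ν) * max (q ^ (1 - ν) * |H q|) (q ^ (χ + ν) * (q ^ (1 - ν) * |H q|)) :=
        one_add_rpow_mul_le hq.le hχν (by positivity)
    _ ≤ 2 ^ (χ + ν) * (M / (1 - ν) + M / (χ + 1)) := by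
        have : 0 ≤ M / (1 - ν) := div_nonneg hM (by linarith)
        gcongr
        exact max_le (hnear.trans (le_add_of_nonneg_right (by positivity)))
          (hfar.trans (le_add_of_nonneg_left this))

lemma abs_tailIntegral_tailIntegral_div_le_rpow_neg (hg : WeightedBound ν χ M g) (hχ : 0 < χ)
    (hχν : 0 ≤ χ + ν) (hq : 0 < q) :
    |tailIntegral (tailIntegral fun r => g r / r) q| ≤ M / (χ + 1) / χ * q ^ (-χ) := by
  refine (abs_integral_Ioi_le_rpow hq (by linarith : -χ - 1 < -1)
    fun p hp => hg.abs_tailIntegral_div_le_rpow_neg_sub_one hχ hχν (hq.trans hp)).trans_eq ?_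
  rw [show -χ - 1 + 1 = -χ by ring, neg_neg]
  ring

lemma abs_tailIntegral_tailIntegral_div_le (hg : WeightedBound ν χ M g)
    (hgc : ContinuousOn g (Ioi 0)) (hν : ν ∈ Ioo 0 1) (hχ : 0 < χ) (hq : 0 < q) :
    |tailIntegral (tailIntegral fun r => g r / r) q| ≤ M / (1 - ν) / ν + M / (χ + 1) / χ := by
  have hχν : 0 ≤ χ + ν := by linarith [hν.1]
  have hM : 0 ≤ M / (1 - ν) := div_nonneg hg.nonneg (by linarith [hν.2])
  have hfar : ∀ q, 1 ≤ q →
      |tailIntegral (tailIntegral fun r => g r / r) q| ≤ M / (χ + 1) / χ := fun q hq =>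
    (hg.abs_tailIntegral_tailIntegral_div_le_rpow_neg hχ hχν (one_pos.trans_le hq)).trans
      (mul_le_of_le_one_right (div_nonneg (div_nonneg hg.nonneg (by linarith)) hχ.le)
        (Real.rpow_le_one_of_one_le_of_nonpos hq (by linarith)))
  rcases le_total 1 q with hq1 | hq1
  · exact (hfar q hq1).trans (le_add_of_nonneg_left (div_nonneg hM hν.1.le))
  have hint := hg.integrableOn_tailIntegral_div hgc hν hχ
  have hnear : |∫ p in q..1, tailIntegral (fun r => g r / r) p| ≤ M / (1 - ν) / ν := by
    refine (abs_intervalIntegral_le_rpow hq1 (by linarith [hν.1] : -1 < ν - 1)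
      fun p hp => hg.abs_tailIntegral_div_le_rpow_sub_one hν.2 hχν (hq.trans hp.1)).trans ?_
    rw [show ν - 1 + 1 = ν by ring, Real.one_rpow]
    have hqν : 0 ≤ q ^ ν := by positivity
    exact div_le_div_of_nonneg_right (mul_le_of_le_one_right hM (by linarith)) hν.1.le
  rw [tailIntegral, ← intervalIntegral.integral_interval_add_Ioi
    (hint.mono_set (Ioi_subset_Ioi hq.le)) (hint.mono_set (Ioi_subset_Ioi zero_le_one))]
  exact (abs_add_le _ _).trans (add_le_add hnear (hfar 1 le_rfl))

lemma weighted_tailIntegral_tailIntegral_div_le (hg : WeightedBound ν χ M g)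
    (hgc : ContinuousOn g (Ioi 0)) (hν : ν ∈ Ioo 0 1) (hχ : 0 < χ) (hq : 0 < q) :
    (1 + q) ^ χ * |tailIntegral (tailIntegral fun r => g r / r) q| ≤
      2 ^ χ * (M / (1 - ν) / ν + M / (χ + 1) / χ) := by
  have hχν : 0 ≤ χ + ν := by linarith [hν.1]
  have hfar : q ^ χ * |tailIntegral (tailIntegral fun r => g r / r) q| ≤ M / (χ + 1) / χ :=
    calc _ ≤ q ^ χ * (M / (χ + 1) / χ * q ^ (-χ)) := by
          gcongr; exact hg.abs_tailIntegral_tailIntegral_div_le_rpow_neg hχ hχν hq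
      _ = M / (χ + 1) / χ := by
          rw [mul_left_comm, ← Real.rpow_add hq, add_neg_cancel, Real.rpow_zero, mul_one]
  have hM : 0 ≤ M / (1 - ν) / ν := div_nonneg (div_nonneg hg.nonneg (by linarith [hν.2])) hν.1.le
  refine (one_add_rpow_mul_le hq.le hχ.le (abs_nonneg _)).trans ?_
  gcongr
  exact max_le (hg.abs_tailIntegral_tailIntegral_div_le hgc hν hχ hq)
    (hfar.trans (le_add_of_nonneg_left hM))

end WeightedBound

section Norms

variable {ρ μ χ B q : ℝ} {k : ℕ} {F G : ℝ → ℝ}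

lemma wq_nonneg (hq : 0 ≤ q) : 0 ≤ wq ρ k μ χ F q := by
  unfold wq; positivity

lemma wq_le_semN (hF : ∃ M, ∀ q, 0 < q → wq ρ k μ χ F q ≤ M) (hq : 0 < q) :
    wq ρ k μ χ F q ≤ semN ρ k μ χ F := by
  obtain ⟨M, hM⟩ := hF
  exact le_ciSup (f := fun q : Ioi (0 : ℝ) => wq ρ k μ χ F q)
    ⟨M, by rintro _ ⟨q, rfl⟩; exact hM q q.2⟩ ⟨q, hq⟩

lemma semN_nonneg (hF : ∃ M, ∀ q, 0 < q → wq ρ k μ χ F q ≤ M) : 0 ≤ semN ρ k μ χ F :=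
  (wq_nonneg zero_le_one).trans (wq_le_semN hF one_pos)

lemma semN_le (h : ∀ q, 0 < q → wq ρ k μ χ F q ≤ B) : semN ρ k μ χ F ≤ B :=
  have : Nonempty (Ioi (0 : ℝ)) := ⟨⟨1, by norm_num⟩⟩
  ciSup_le fun q => h q q.2

lemma fullN_one : fullN ρ 1 μ χ F = semN ρ 0 (-ρ) χ F + semN ρ 1 μ χ F := by
  simp [fullN]

lemma fullN_two :
    fullN ρ 2 μ χ F = semN ρ 0 (-ρ) χ F + (semN ρ 1 μ χ F + semN ρ 2 μ χ F) := by
  rw [fullN, Finset.sum_Icc_succ_top one_le_two, Finset.Icc_self, Finset.sum_singleton]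

lemma weightedBound_deriv (hG : ∃ M, ∀ q, 0 < q → wq ρ 1 μ χ G q ≤ M) :
    WeightedBound (ρ + μ) χ (semN ρ 1 μ χ G) (deriv G) := by
  intro q hq
  convert wq_le_semN hG hq using 1
  simp only [wq, Function.iterate_one, Nat.cast_one]
  ring_nf

lemma wq_zero_neg : wq ρ 0 (-ρ) χ F q = (1 + q) ^ χ * |F q| := by
  simp only [wq, Function.iterate_zero, id, Nat.cast_zero]
  rw [show χ + -ρ + ρ = χ by ring, show (0 : ℝ) - ρ - -ρ = 0 by ring, Real.rpow_zero, mul_one]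

end Norms

section Arho

variable {ρ μ χ ν M q : ℝ} {G : ℝ → ℝ}

lemma hasDerivAt_Arho (hg : WeightedBound ν χ M (deriv G))
    (hgc : ContinuousOn (deriv G) (Ioi 0)) (hν : ν ∈ Ioo 0 1) (hχ : 0 < χ) (hq : 0 < q) :
    HasDerivAt (Arho ρ G) ((1 - ρ) * tailIntegral (fun r => deriv G r / r) q) q := by
  have hint := hg.integrableOn_tailIntegral_div hgc hν hχ
  exact ((hasDerivAt_tailIntegral
    (hg.continuousOn_tailIntegral_div hgc hν.2 (by linarith [hν.1]))
    (fun _ hb => hint.mono_set (Ioi_subset_Ioi hb.le)) hq).const_mul (-(1 - ρ))).congr_deriv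
    (by ring)

lemma hasDerivAt_deriv_Arho (hg : WeightedBound ν χ M (deriv G))
    (hgc : ContinuousOn (deriv G) (Ioi 0)) (hν : ν ∈ Ioo 0 1) (hχ : 0 < χ) (hq : 0 < q) :
    HasDerivAt (deriv (Arho ρ G)) (-(1 - ρ) * (deriv G q / q)) q := by
  have heq : deriv (Arho ρ G) =ᶠ[𝓝 q]
      fun x => (1 - ρ) * tailIntegral (fun r => deriv G r / r) x :=
    eventually_of_mem (Ioi_mem_nhds hq) fun x hx => (hasDerivAt_Arho hg hgc hν hχ hx).deriv
  exact (((hg.hasDerivAt_tailIntegral_div hgc hν.2 (by linarith [hν.1]) hq).const_mul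
    (1 - ρ)).congr_of_eventuallyEq heq).congr_deriv (by ring)

lemma smooth2_Arho (hg : WeightedBound ν χ M (deriv G))
    (hgc : ContinuousOn (deriv G) (Ioi 0)) (hν : ν ∈ Ioo 0 1) (hχ : 0 < χ) :
    Smooth2 (Arho ρ G) := by
  refine ⟨fun q hq => ?_, fun q hq => (hasDerivAt_Arho hg hgc hν hχ hq).differentiableAt,
    fun q hq => (hasDerivAt_deriv_Arho hg hgc hν hχ hq).differentiableAt⟩
  rcases (mem_Ici.1 hq).eq_or_lt with rfl | hq
  · exact continuousWithinAt_const.mul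
      (continuousWithinAt_tailIntegral (hg.integrableOn_tailIntegral_div hgc hν hχ))
  · exact (hasDerivAt_Arho hg hgc hν hχ hq).continuousAt.continuousWithinAt

lemma wq_zero_Arho_le (hρ : ρ ≤ 1) (hg : WeightedBound ν χ M (deriv G))
    (hgc : ContinuousOn (deriv G) (Ioi 0)) (hν : ν ∈ Ioo 0 1) (hχ : 0 < χ) (hq : 0 < q) :
    wq ρ 0 (-ρ) χ (Arho ρ G) q ≤ (1 - ρ) * (2 ^ χ * (M / (1 - ν) / ν + M / (χ + 1) / χ)) := by
  rw [wq_zero_neg]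
  change _ * |-(1 - ρ) * tailIntegral (tailIntegral fun r => deriv G r / r) q| ≤ _
  rw [abs_mul, abs_neg, abs_of_nonneg (sub_nonneg.2 hρ), mul_left_comm]
  exact mul_le_mul_of_nonneg_left (hg.weighted_tailIntegral_tailIntegral_div_le hgc hν hχ hq)
    (sub_nonneg.2 hρ)

lemma wq_one_Arho_le (hρ : ρ ≤ 1) (hg : WeightedBound (ρ + μ) χ M (deriv G))
    (hgc : ContinuousOn (deriv G) (Ioi 0)) (hν : ρ + μ ∈ Ioo 0 1) (hχ : 0 < χ) (hq : 0 < q) :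
    wq ρ 1 μ χ (Arho ρ G) q ≤
      (1 - ρ) * (2 ^ (χ + (ρ + μ)) * (M / (1 - (ρ + μ)) + M / (χ + 1))) := by
  have hH := hg.tailIntegral_div hν.2 hχ (by linarith [hν.1]) q hq
  simp only [wq, Function.iterate_one, Nat.cast_one, (hasDerivAt_Arho hg hgc hν hχ hq).deriv,
    abs_mul, abs_of_nonneg (sub_nonneg.2 hρ)]
  calc _ = (1 - ρ) * ((1 + q) ^ (χ + (ρ + μ)) * q ^ (1 - (ρ + μ)) *
        |tailIntegral (fun r => deriv G r / r) q|) := by ring_nf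
    _ ≤ _ := mul_le_mul_of_nonneg_left hH (sub_nonneg.2 hρ)

lemma wq_two_Arho (hρ : ρ ≤ 1) (hg : WeightedBound ν χ M (deriv G))
    (hgc : ContinuousOn (deriv G) (Ioi 0)) (hν : ν ∈ Ioo 0 1) (hχ : 0 < χ) (hq : 0 < q) :
    wq ρ 2 μ χ (Arho ρ G) q = (1 - ρ) * wq ρ 1 μ χ G q := by
  simp only [wq, Function.iterate_succ, Function.iterate_zero, Function.comp_apply, id,
    (hasDerivAt_deriv_Arho hg hgc hν hχ hq).deriv, abs_mul, abs_neg, abs_div, abs_of_pos hq,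
    abs_of_nonneg (sub_nonneg.2 hρ)]
  rw [show ((2 : ℕ) : ℝ) - ρ - μ = ((1 : ℕ) : ℝ) - ρ - μ + 1 by push_cast; ring,
    Real.rpow_add_one hq.ne']
  field_simp

end Arho

/-- **Continuity of `A_ρ`** (Lemma 3.1): `A_ρ : X¹_{μ,χ} → X²_{μ,χ}` is
well-defined and continuous. -/
theorem Arho_continuous
    (ρ μ χ : ℝ) (hρ : ρ ∈ Set.Ioo (0:ℝ) 1)
    (hμ0 : 0 ≤ μ) (hμ : μ < min ρ (1 - ρ)) (hχ : 0 < χ) :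
    ∃ C : ℝ, 0 < C ∧ ∀ G : ℝ → ℝ, MemX ρ 1 μ χ G →
      (∀ p : ℝ, 0 < p →
        MeasureTheory.IntegrableOn (fun r => deriv G r / r) (Set.Ioi p)) ∧
      (∀ q : ℝ, 0 ≤ q →
        MeasureTheory.IntegrableOn
          (fun p => ∫ r in Set.Ioi p, deriv G r / r) (Set.Ioi q)) ∧
      MemX ρ 2 μ χ (Arho ρ G) ∧
      fullN ρ 2 μ χ (Arho ρ G) ≤ C * fullN ρ 1 μ χ G := by
  obtain ⟨hρ0, hρ1⟩ := hρ
  have hν : ρ + μ ∈ Ioo 0 1 := ⟨by linarith, by linarith [min_le_right ρ (1 - ρ)]⟩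
  have h1ν : 0 < 1 - (ρ + μ) := by linarith [hν.2]
  set K := 2 ^ χ * (1 / (1 - (ρ + μ)) / (ρ + μ) + 1 / (χ + 1) / χ) +
    2 ^ (χ + (ρ + μ)) * (1 / (1 - (ρ + μ)) + 1 / (χ + 1)) + 1
  have hK : 0 < K := by have := hν.1; positivity
  refine ⟨(1 - ρ) * K, mul_pos (by linarith) hK, fun G ⟨hSm, hG0, hG1⟩ => ?_⟩
  have hG1' := hG1 1 (by simp)
  have hgc : ContinuousOn (deriv G) (Ioi 0) := fun q hq =>
    (hSm.2.2 q hq).continuousAt.continuousWithinAt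
  have hg := weightedBound_deriv hG1'
  have h0 := fun q hq => wq_zero_Arho_le hρ1.le hg hgc hν hχ (q := q) hq
  have h1 := fun q hq => wq_one_Arho_le hρ1.le hg hgc hν hχ (q := q) hq
  have h2 : ∀ q, 0 < q → wq ρ 2 μ χ (Arho ρ G) q ≤ (1 - ρ) * semN ρ 1 μ χ G :=
    fun q hq => (wq_two_Arho hρ1.le hg hgc hν hχ hq).trans_le
        (mul_le_mul_of_nonneg_left (wq_le_semN hG1' hq) (by linarith))
  refine ⟨fun p hp => hg.integrableOn_div hgc hν.2 (by linarith) hp,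
    fun q hq => (hg.integrableOn_tailIntegral_div hgc hν hχ).mono_set (Ioi_subset_Ioi hq),
    ⟨smooth2_Arho hg hgc hν hχ, ⟨_, h0⟩, fun ℓ hℓ => ?_⟩, ?_⟩
  · obtain rfl | rfl : ℓ = 1 ∨ ℓ = 2 := by simp at hℓ; omega
    exacts [⟨_, h1⟩, ⟨_, h2⟩]
  · rw [fullN_two, fullN_one]
    calc _ ≤ _ := add_le_add (semN_le h0) (add_le_add (semN_le h1) (semN_le h2))
      _ = (1 - ρ) * K * semN ρ 1 μ χ G := by ring
      _ ≤ _ := by gcongr; linarith [semN_nonneg hG0]
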